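/- arXiv:2111.08985 — 6 statements merged into one kernel-verified Lean document; each statement's English description precedes it below -/
import Mathlib

section
/- Let a, b, c, γ be positive reals satisfying cosh c = sinh a · sinh b · cosh γ − cosh a · cosh b (the hexagon relation for a right-angled hyperbolic hexagon, where γ is the side between a and b opposite to c). If a ≥ b and a ≥ c, then sinh(γ/2) · sinh(b/2) ≤ 1/2. -/
open Real

theorem hexagon_sinh_ineq (a b c γ : ℝ) (ha : 0 < a) (hb : 0 < b) (hc : 0 < c)
    (hγ : 0 < γ)
    (hex : cosh c = sinh a * sinh b * cosh γ - cosh a * cosh b)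
    (hab : a ≥ b) (hac : a ≥ c) :
    sinh (γ / 2) * sinh (b / 2) ≤ 1 / 2 := by
  have hsa : 0 < sinh a := Real.sinh_pos_iff.2 ha
  have hsb : 0 < sinh b := Real.sinh_pos_iff.2 hb
  have hca : 1 ≤ cosh a := Real.one_le_cosh a
  have hcb : 1 ≤ cosh b := Real.one_le_cosh b
  have hcc : cosh c ≤ cosh a := Real.cosh_le_cosh.2 (by
    rw [abs_of_pos hc, abs_of_pos ha]; exact hac)
  have hsub : 0 ≤ sinh a * cosh b - cosh a * sinh b := by
    have := Real.sinh_nonneg_iff.2 (sub_nonneg.2 hab)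
    rwa [Real.sinh_sub] at this
  have hu : 0 < sinh (γ / 2) := Real.sinh_pos_iff.2 (by linarith)
  have hv : 0 < sinh (b / 2) := Real.sinh_pos_iff.2 (by linarith)
  have hcγ : cosh γ = 2 * sinh (γ / 2) ^ 2 + 1 := by
    have h := Real.cosh_two_mul (γ / 2)
    have h2 := Real.cosh_sq (γ / 2)
    rw [show 2 * (γ / 2) = γ by ring] at h
    linarith
  have hcb2 : cosh b = 2 * sinh (b / 2) ^ 2 + 1 := by
    have h := Real.cosh_two_mul (b / 2)
    have h2 := Real.cosh_sq (b / 2)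
    rw [show 2 * (b / 2) = b by ring] at h
    linarith
  have hsb2 : sinh b = 2 * sinh (b / 2) * cosh (b / 2) := by
    have h := Real.sinh_two_mul (b / 2)
    rw [show 2 * (b / 2) = b by ring] at h
    exact h
  -- key: (cosh γ - 1) * (cosh b - 1) ≤ 1
  have key : (cosh γ - 1) * (cosh b - 1) ≤ 1 := by
    have hca2 : cosh a ^ 2 = sinh a ^ 2 + 1 := Real.cosh_sq a
    have hcb2' : cosh b ^ 2 = sinh b ^ 2 + 1 := Real.cosh_sq b
    have h1 : sinh a * sinh b * (cosh γ - 1) * (cosh b - 1)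
        ≤ (cosh a + cosh a * cosh b - sinh a * sinh b) * (cosh b - 1) := by
      have : sinh a * sinh b * cosh γ ≤ cosh a + cosh a * cosh b := by linarith
      nlinarith [this, hcb]
    have h2 : (cosh a + cosh a * cosh b - sinh a * sinh b) * (cosh b - 1)
        ≤ sinh a * sinh b := by
      nlinarith [hsub, hsb, hcb2']
    have h3 := le_trans h1 h2
    have h4 : (sinh a * sinh b) * ((cosh γ - 1) * (cosh b - 1)) ≤ (sinh a * sinh b) * 1 := by
      nlinarith [h3]
    exact le_of_mul_le_mul_left h4 (mul_pos hsa hsb)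
  nlinarith [key, hu, hv, mul_pos hu hv]
end

section
/- Let a, b, c, γ be positive reals satisfying cosh c = sinh a · sinh b · cosh γ − cosh a · cosh b, with a ≥ b, a ≥ c, and suppose sinh(γ/2) · sinh(b/2) = 1/2. Then a = b = c. -/
open Real

theorem hexagon_sinh_eq_case (a b c γ : ℝ) (ha : 0 < a) (hb : 0 < b) (hc : 0 < c)
    (hγ : 0 < γ)
    (hex : cosh c = sinh a * sinh b * cosh γ - cosh a * cosh b)
    (hab : a ≥ b) (hac : a ≥ c)
    (heq : sinh (γ / 2) * sinh (b / 2) = 1 / 2) :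
    a = b ∧ b = c := by
  have hS : (0:ℝ) < sinh (b/2) := Real.sinh_pos_iff.2 (by linarith)
  have hC : (0:ℝ) < cosh (b/2) := Real.cosh_pos _
  have e1 : sinh b = 2 * sinh (b/2) * cosh (b/2) := by
    have := Real.sinh_two_mul (b/2); rw [show 2*(b/2) = b by ring] at this; exact this
  have e2 : cosh b = cosh (b/2)^2 + sinh (b/2)^2 := by
    have := Real.cosh_two_mul (b/2); rw [show 2*(b/2) = b by ring] at this; exact this
  have e3 : cosh γ = 2 * sinh (γ/2)^2 + 1 := by
    have := Real.cosh_two_mul (γ/2); rw [show 2*(γ/2) = γ by ring] at this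
    rw [this, Real.cosh_sq]; ring
  have e5 : cosh (b/2)^2 = sinh (b/2)^2 + 1 := Real.cosh_sq _
  have key : cosh c * sinh (b/2) = cosh a * sinh (b/2) + sinh (a-b) * cosh (b/2) := by
    rw [hex, Real.sinh_sub, e1, e2, e3]
    linear_combination (4 * sinh a * cosh (b/2) * (sinh (γ/2) * sinh (b/2) + 1/2)) * heq +
      (- sinh a * cosh (b/2) + cosh a * sinh (b/2)) * e5
  have hcc : cosh c ≤ cosh a := by
    rw [Real.cosh_le_cosh, abs_of_pos hc, abs_of_pos ha]; exact hac
  have hba : a ≤ b := by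
    by_contra h
    push_neg at h
    have : 0 < sinh (a - b) := Real.sinh_pos_iff.2 (by linarith)
    nlinarith
  have hab' : a = b := le_antisymm hba hab
  subst hab'
  refine ⟨rfl, ?_⟩
  rw [sub_self, Real.sinh_zero, zero_mul, add_zero] at key
  have hca : cosh c = cosh a := mul_right_cancel₀ (ne_of_gt hS) key
  rcases lt_trichotomy a c with h|h|h
  · exact absurd hca (ne_of_lt (Real.cosh_lt_cosh.2 (by
      rw [abs_of_pos ha, abs_of_pos hc]; exact h))).symm
  · exact h
  · exact absurd hca (ne_of_lt (Real.cosh_lt_cosh.2 (by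
      rw [abs_of_pos hc, abs_of_pos ha]; exact h)))
end

section
/- If a = b = c are positive reals and γ > 0 satisfies cosh c = sinh a · sinh b · cosh γ − cosh a · cosh b, then sinh(γ/2) · sinh(b/2) = 1/2. -/
open Real

theorem hexagon_regular_eq (a b c γ : ℝ) (ha : 0 < a) (hb : 0 < b) (hc : 0 < c)
    (hγ : 0 < γ) (hab : a = b) (hbc : b = c)
    (hex : cosh c = sinh a * sinh b * cosh γ - cosh a * cosh b) :
    sinh (γ / 2) * sinh (b / 2) = 1 / 2 := by
  rw [hab] at hex
  rw [← hbc] at hex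
  set S := sinh (b / 2) with hSdef
  set T := sinh (γ / 2) with hTdef
  have hS : 0 < S := Real.sinh_pos_iff.2 (by linarith)
  have hT : 0 < T := Real.sinh_pos_iff.2 (by linarith)
  have hcb : cosh b = 2 * S ^ 2 + 1 := by
    have h2 : cosh (2 * (b / 2)) = cosh (b / 2) ^ 2 + sinh (b / 2) ^ 2 := cosh_two_mul _
    have h3 : cosh (b / 2) ^ 2 = S ^ 2 + 1 := by rw [cosh_sq]
    rw [show 2 * (b / 2) = b by ring] at h2
    rw [h2, h3]; ring
  have hcγ : cosh γ = 2 * T ^ 2 + 1 := by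
    have h2 : cosh (2 * (γ / 2)) = cosh (γ / 2) ^ 2 + sinh (γ / 2) ^ 2 := cosh_two_mul _
    have h3 : cosh (γ / 2) ^ 2 = T ^ 2 + 1 := by rw [cosh_sq]
    rw [show 2 * (γ / 2) = γ by ring] at h2
    rw [h2, h3]; ring
  have hsb : sinh b ^ 2 = 4 * S ^ 2 * (S ^ 2 + 1) := by
    have h2 : sinh (2 * (b / 2)) = 2 * S * cosh (b / 2) := sinh_two_mul _
    have h3 : cosh (b / 2) ^ 2 = S ^ 2 + 1 := by rw [cosh_sq]
    rw [show 2 * (b / 2) = b by ring] at h2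
    rw [h2]; nlinarith [h3]
  rw [hcb, hcγ] at hex
  have key : 4 * S ^ 2 * T ^ 2 = 1 := by nlinarith [hsb, sq_nonneg S, hS, hT]
  nlinarith [key, mul_pos hT hS]
end

section
/- Let a, b, c, α be positive reals satisfying cosh a = sinh b · sinh c · cosh α − cosh b · cosh c. Then a ≥ b + c if and only if sinh²(α/2) · tanh b · tanh c ≥ 1. -/
open Real

theorem hexagon_length_iff (a b c α : ℝ) (ha : 0 < a) (hb : 0 < b) (hc : 0 < c)
    (hα : 0 < α)
    (hex : cosh a = sinh b * sinh c * cosh α - cosh b * cosh c) :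
    a ≥ b + c ↔ sinh (α / 2) ^ 2 * tanh b * tanh c ≥ 1 := by
  have hcb : (0:ℝ) < cosh b := Real.cosh_pos _
  have hcc : (0:ℝ) < cosh c := Real.cosh_pos _
  have hsb : 0 < sinh b := Real.sinh_pos_iff.2 hb
  have hsc : 0 < sinh c := Real.sinh_pos_iff.2 hc
  have hα2 : cosh α = 1 + 2 * sinh (α/2)^2 := by
    have h : α = 2*(α/2) := by ring
    rw [h, Real.cosh_two_mul, Real.cosh_sq]
    ring
  have h1 : a ≥ b + c ↔ cosh (b+c) ≤ cosh a := by
    rw [Real.cosh_le_cosh, abs_of_pos (by linarith), abs_of_pos ha]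
  rw [h1, hex, Real.cosh_add, hα2, Real.tanh_eq_sinh_div_cosh,
    Real.tanh_eq_sinh_div_cosh]
  constructor
  · intro h
    rw [ge_iff_le, ← sub_nonneg]
    have key : cosh b * cosh c ≤ sinh (α/2)^2 * sinh b * sinh c := by nlinarith
    have : 0 ≤ (sinh (α/2)^2 * sinh b * sinh c - cosh b * cosh c) / (cosh b * cosh c) :=
      div_nonneg (by linarith) (by positivity)
    calc (0:ℝ) ≤ _ := this
      _ = sinh (α / 2) ^ 2 * (sinh b / cosh b) * (sinh c / cosh c) - 1 := by
        field_simp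
  · intro h
    rw [ge_iff_le, ← sub_nonneg] at h
    have h' : 0 ≤ sinh (α/2)^2 * sinh b * sinh c - cosh b * cosh c := by
      have := mul_nonneg (mul_nonneg h hcb.le) hcc.le
      calc (0:ℝ) ≤ _ := this
        _ = sinh (α/2)^2 * sinh b * sinh c - cosh b * cosh c := by
          field_simp
    nlinarith
end

section
/- Let b > 0 and γ > 0 be reals satisfying cosh γ ≤ (cosh b + cosh² b)/(sinh² b). Then sinh(γ/2) · sinh(b/2) ≤ 1/2. -/
open Real

theorem cosh_bound_implies_sinh_half (b γ : ℝ) (hb : 0 < b) (hγ : 0 < γ)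
    (h : cosh γ ≤ (cosh b + cosh b ^ 2) / sinh b ^ 2) :
    sinh (γ / 2) * sinh (b / 2) ≤ 1 / 2 := by
  have hsb : 0 < sinh b := Real.sinh_pos_iff.2 hb
  have hcb : 1 < cosh b := by
    have := Real.one_lt_cosh (x := b); simpa [abs_of_pos hb, this] using (this.2 hb.ne')
  have hsq : cosh b ^ 2 - sinh b ^ 2 = 1 := Real.cosh_sq_sub_sinh_sq b
  have hmul : cosh γ * sinh b ^ 2 ≤ cosh b + cosh b ^ 2 := by
    calc cosh γ * sinh b ^ 2 ≤ ((cosh b + cosh b ^ 2) / sinh b ^ 2) * sinh b ^ 2 := by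
          apply mul_le_mul_of_nonneg_right h (by positivity)
      _ = cosh b + cosh b ^ 2 := by field_simp
  have h1 : cosh γ * (cosh b - 1) ≤ cosh b := by
    have hpos : (0:ℝ) < cosh b + 1 := by linarith
    have e : (cosh b - 1) * (cosh b + 1) = sinh b ^ 2 := by linear_combination hsq
    have : cosh γ * (cosh b - 1) * (cosh b + 1) ≤ cosh b * (cosh b + 1) := by
      calc cosh γ * (cosh b - 1) * (cosh b + 1) = cosh γ * sinh b ^ 2 := by rw [← e]; ring
        _ ≤ cosh b + cosh b ^ 2 := hmul
        _ = cosh b * (cosh b + 1) := by ring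
    exact le_of_mul_le_mul_right this hpos
  have key : (cosh γ - 1) * (cosh b - 1) ≤ 1 := by nlinarith
  have hγ2 : cosh γ = 2 * sinh (γ / 2) ^ 2 + 1 := by
    have := Real.cosh_two_mul (γ / 2)
    have h2 : cosh (γ / 2) ^ 2 = sinh (γ / 2) ^ 2 + 1 := Real.cosh_sq (γ / 2)
    rw [show (2 : ℝ) * (γ / 2) = γ by ring] at this
    linarith
  have hb2 : cosh b = 2 * sinh (b / 2) ^ 2 + 1 := by
    have := Real.cosh_two_mul (b / 2)
    have h2 : cosh (b / 2) ^ 2 = sinh (b / 2) ^ 2 + 1 := Real.cosh_sq (b / 2)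
    rw [show (2 : ℝ) * (b / 2) = b by ring] at this
    linarith
  have hsγ2 : 0 < sinh (γ / 2) := Real.sinh_pos_iff.2 (by linarith)
  have hsb2 : 0 < sinh (b / 2) := Real.sinh_pos_iff.2 (by linarith)
  nlinarith [key, sq_nonneg (sinh (γ / 2) * sinh (b / 2) - 1 / 2), mul_pos hsγ2 hsb2]
end

section
/- Let a = b = c > 0 and let γ > 0 be determined by the hexagon relation cosh a = sinh² a · cosh γ − cosh² a. Then cosh γ = (cosh a + cosh² a)/sinh² a and sinh(γ/2)·sinh(a/2) = 1/2. -/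
open Real

theorem regular_hexagon_equality (a γ : ℝ) (ha : 0 < a) (hγ : 0 < γ)
    (hex : cosh a = sinh a ^ 2 * cosh γ - cosh a ^ 2) :
    cosh γ = (cosh a + cosh a ^ 2) / sinh a ^ 2 ∧
    sinh (γ / 2) * sinh (a / 2) = 1 / 2 := by
  have hsa : 0 < sinh a := Real.sinh_pos_iff.mpr ha
  have hs2 : 0 < sinh (a / 2) := Real.sinh_pos_iff.mpr (by linarith)
  have ht2 : 0 < sinh (γ / 2) := Real.sinh_pos_iff.mpr (by linarith)
  set s := sinh (a / 2) with hs
  set t := sinh (γ / 2) with ht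
  have hca : cosh a = 2 * s ^ 2 + 1 := by
    have h1 : cosh (2 * (a / 2)) = cosh (a / 2) ^ 2 + sinh (a / 2) ^ 2 := Real.cosh_two_mul _
    have h2 : cosh (a / 2) ^ 2 = s ^ 2 + 1 := Real.cosh_sq _
    have h3 : (2 : ℝ) * (a / 2) = a := by ring
    rw [h3, h2] at h1
    rw [h1]; ring
  have hcg : cosh γ = 2 * t ^ 2 + 1 := by
    have h1 : cosh (2 * (γ / 2)) = cosh (γ / 2) ^ 2 + sinh (γ / 2) ^ 2 := Real.cosh_two_mul _
    have h2 : cosh (γ / 2) ^ 2 = t ^ 2 + 1 := Real.cosh_sq _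
    have h3 : (2 : ℝ) * (γ / 2) = γ := by ring
    rw [h3, h2] at h1
    rw [h1]; ring
  have hsq : sinh a ^ 2 = cosh a ^ 2 - 1 := by
    have := Real.cosh_sq a; linarith
  constructor
  · have hne : sinh a ^ 2 ≠ 0 := pow_ne_zero _ (ne_of_gt hsa)
    field_simp
    linarith [hex]
  · rw [hca, hcg] at hex
    rw [hsq, hca] at hex
    have key : (4 * s ^ 2 * t ^ 2 - 1) * (s ^ 2 + 1) = 0 := by ring_nf; nlinarith [hex]
    have hpos : (0:ℝ) < s ^ 2 + 1 := by positivity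
    have key2 : 4 * s ^ 2 * t ^ 2 = 1 := by
      rcases mul_eq_zero.mp key with h | h
      · linarith
      · linarith
    nlinarith [mul_pos hs2 ht2]
end
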